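/- Fix ℓ > 0, q > 1, and α with 1 < α < 2, and write n = ⌊m + ℓ m^q⌋. Then the Slicer Map auto-correlation φ(n, m) is asymptotic to (2α/((2−α)(α−1))) m^(2−α) as m → ∞. -/

import Mathlib

open Filter Topology

/-- ℓ⁺_m(α) = 1 - (m + 2^(1/α))^(-α) -/
noncomputable def ellp (α : ℝ) (m : ℕ) : ℝ := 1 - ((m : ℝ) + (2 : ℝ) ^ (1/α)) ^ (-α)

/-- Δ_k(α) = ℓ⁺_k(α) - ℓ⁺_{k-1}(α) -/
noncomputable def Dlt (α : ℝ) (k : ℕ) : ℝ := ellp α k - ellp α (k - 1)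

/-- Position-position auto-correlation of the Slicer Map, for times m ≤ n. -/
noncomputable def phi (α : ℝ) (n m : ℕ) : ℝ :=
  2 * ∑ k ∈ Finset.Icc 1 m, (k : ℝ) ^ 2 * Dlt α k
    + 2 * m * ∑ k ∈ Finset.Icc (m + 1) n, (k : ℝ) * Dlt α k
    + 2 * m * n * ∑' k : ℕ, Dlt α (n + 1 + k)

/-! With `a_j = (j + 2^(1/α))^(-α) = 1 - ℓ⁺_j(α)` we have `Δ_(j+1) = a_j - a_(j+1)`, and Abel
summation turns `φ(n, m)` into `2 ∑_{i<m} (2i+1) a_i + 2m ∑_{m ≤ k < n} a_k`. Comparing a sum of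
`x^(p-1)` with the increments of `x^p / p` (mean value theorem) shows that the first sum is
`~ 2 m^(2-α) / (2-α)` and, because `n / m → ∞`, that the second is `~ m^(1-α) / (α-1)`. Hence
`φ(n, m) ~ (4 / (2-α) + 2 / (α-1)) m^(2-α) = 2α / ((2-α)(α-1)) · m^(2-α)`. -/

open Finset

namespace Real

variable {p : ℝ}

theorem add_one_rpow_sub_rpow_div_mem_Icc (hp0 : p ≠ 0) (hp1 : p ≤ 1) {x : ℝ} (hx : 0 < x) :
    ((x + 1) ^ p - x ^ p) / p ∈ Set.Icc ((x + 1) ^ (p - 1)) (x ^ (p - 1)) := by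
  have hderiv : ∀ y ∈ Set.Ioo x (x + 1), HasDerivAt (· ^ p) (p * y ^ (p - 1)) y := fun y hy =>
    hasDerivAt_rpow_const (Or.inl (hx.trans hy.1).ne')
  have hcont : ContinuousOn (· ^ p) (Set.Icc x (x + 1)) := fun y hy =>
    (continuousAt_rpow_const y p (Or.inl (hx.trans_le hy.1).ne')).continuousWithinAt
  obtain ⟨ξ, ⟨hxξ, hξx⟩, hslope⟩ := exists_hasDerivAt_eq_slope _ _ (by linarith) hcont hderiv
  have hξ : ((x + 1) ^ p - x ^ p) / p = ξ ^ (p - 1) := by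
    rw [add_sub_cancel_left, div_one] at hslope
    rw [← hslope]; field_simp
  have hp1' : p - 1 ≤ 0 := by linarith
  rw [hξ]
  exact ⟨rpow_le_rpow_of_nonpos (hx.trans hxξ) hξx.le hp1',
    rpow_le_rpow_of_nonpos hx hxξ.le hp1'⟩

variable {t : ℝ}

theorem natCast_add_rpow_sub_rpow_div_eq_sum (N : ℕ) :
    (((N : ℝ) + t) ^ p - t ^ p) / p
      = ∑ i ∈ range N, ((((i : ℝ) + t) + 1) ^ p - ((i : ℝ) + t) ^ p) / p := by
  rw [← sum_div]
  congr 1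
  convert (sum_range_sub (fun i : ℕ => ((i : ℝ) + t) ^ p) N).symm using 2 <;> push_cast <;> ring_nf

theorem le_sum_rpow_sub_one (hp0 : p ≠ 0) (hp1 : p ≤ 1) (ht : 0 < t) (N : ℕ) :
    (((N : ℝ) + t) ^ p - t ^ p) / p ≤ ∑ i ∈ range N, ((i : ℝ) + t) ^ (p - 1) := by
  rw [natCast_add_rpow_sub_rpow_div_eq_sum]
  exact sum_le_sum fun i _ => (add_one_rpow_sub_rpow_div_mem_Icc hp0 hp1 (by positivity)).2

theorem sum_rpow_sub_one_le (hp0 : p ≠ 0) (hp1 : p ≤ 1) (ht : 0 < t) (N : ℕ) :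
    ∑ i ∈ range N, ((i : ℝ) + t) ^ (p - 1) ≤ t ^ (p - 1) + (((N : ℝ) + t) ^ p - t ^ p) / p := by
  have hshift : ∑ i ∈ range N, ((i : ℝ) + t) ^ (p - 1) + ((N : ℝ) + t) ^ (p - 1)
      = ∑ i ∈ range N, (((i : ℝ) + t) + 1) ^ (p - 1) + t ^ (p - 1) := by
    rw [← sum_range_succ, sum_range_succ']
    push_cast
    simp only [add_right_comm _ (1 : ℝ), zero_add]
  have hle : ∑ i ∈ range N, (((i : ℝ) + t) + 1) ^ (p - 1) ≤ (((N : ℝ) + t) ^ p - t ^ p) / p := by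
    rw [natCast_add_rpow_sub_rpow_div_eq_sum]
    exact sum_le_sum fun i _ => (add_one_rpow_sub_rpow_div_mem_Icc hp0 hp1 (by positivity)).1
  have hnonneg : 0 ≤ ((N : ℝ) + t) ^ (p - 1) := by positivity
  linarith

theorem sum_rpow_sub_one_le_of_neg (hp : p < 0) (ht : 0 < t) (N : ℕ) :
    ∑ i ∈ range N, ((i : ℝ) + t) ^ (p - 1) ≤ t ^ (p - 1) - t ^ p / p := by
  have hlast : ((N : ℝ) + t) ^ p / p ≤ 0 := div_nonpos_of_nonneg_of_nonpos (by positivity) hp.le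
  have := sum_rpow_sub_one_le hp.ne (by linarith) ht N
  linarith [sub_div (((N : ℝ) + t) ^ p) (t ^ p) p]

theorem tendsto_const_div_natCast_rpow (hp : 0 < p) (K : ℝ) :
    Tendsto (fun m : ℕ => K / (m : ℝ) ^ p) atTop (𝓝 0) :=
  tendsto_const_nhds.div_atTop ((tendsto_rpow_atTop hp).comp tendsto_natCast_atTop_atTop)

theorem tendsto_natCast_add_rpow_div_rpow {c : ℝ} (hc : 0 ≤ c) (p : ℝ) :
    Tendsto (fun m : ℕ => ((m : ℝ) + c) ^ p / (m : ℝ) ^ p) atTop (𝓝 1) := by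
  have hbase : Tendsto (fun m : ℕ => 1 + c / (m : ℝ)) atTop (𝓝 1) := by
    simpa using (tendsto_const_div_atTop_nhds_zero_nat c).const_add 1
  have hlim : Tendsto (fun m : ℕ => (1 + c / (m : ℝ)) ^ p) atTop (𝓝 1) := by
    simpa using hbase.rpow_const (p := p) (Or.inl one_ne_zero)
  refine hlim.congr' ?_
  filter_upwards [eventually_gt_atTop 0] with m hm
  have hm' : (0 : ℝ) < m := Nat.cast_pos.2 hm
  rw [← div_rpow (by positivity) hm'.le, add_div, div_self hm'.ne']

variable {c : ℝ}

theorem tendsto_sum_rpow_sub_one_div_rpow (hp0 : 0 < p) (hp1 : p ≤ 1) (hc : 0 < c) :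
    Tendsto (fun m : ℕ => (∑ i ∈ range m, ((i : ℝ) + c) ^ (p - 1)) / (m : ℝ) ^ p)
      atTop (𝓝 (1 / p)) := by
  have hratio := tendsto_natCast_add_rpow_div_rpow hc.le p
  have hlower : Tendsto (fun m : ℕ => (((m : ℝ) + c) ^ p - c ^ p) / p / (m : ℝ) ^ p)
      atTop (𝓝 (1 / p)) := by
    have := ((hratio.const_mul (1 / p))).sub (tendsto_const_div_natCast_rpow hp0 (c ^ p / p))
    rw [mul_one, sub_zero] at this
    exact this.congr fun m => by ring
  have hupper : Tendsto (fun m : ℕ => (c ^ (p - 1) + (((m : ℝ) + c) ^ p - c ^ p) / p) / (m : ℝ) ^ p)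
      atTop (𝓝 (1 / p)) := by
    have := (tendsto_const_div_natCast_rpow hp0 (c ^ (p - 1))).add hlower
    rw [zero_add] at this
    exact this.congr fun m => by ring
  refine tendsto_of_tendsto_of_tendsto_of_le_of_le hlower hupper (fun m => ?_) (fun m => ?_)
  · exact div_le_div_of_nonneg_right (le_sum_rpow_sub_one hp0.ne' hp1 hc m) (by positivity)
  · exact div_le_div_of_nonneg_right
      (sum_rpow_sub_one_le hp0.ne' hp1 hc m) (by positivity)

theorem tendsto_rpow_neg_mul_sum_rpow_sub_one_tail (hp : p < 0) (hc : 0 < c) {n : ℕ → ℕ}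
    (hmn : ∀ m, m ≤ n m) (hn : Tendsto (fun m => (n m : ℝ) / m) atTop atTop) :
    Tendsto (fun m : ℕ =>
        (m : ℝ) ^ (-p) * ∑ i ∈ range (n m - m), ((i : ℝ) + ((m : ℝ) + c)) ^ (p - 1))
      atTop (𝓝 (-1 / p)) := by
  set R : ℕ → ℝ := fun m => ((m : ℝ) + c) ^ p / (m : ℝ) ^ p
  set Q : ℕ → ℝ := fun m => (((n m : ℝ) + c) / m) ^ p
  have hR : Tendsto R atTop (𝓝 1) := tendsto_natCast_add_rpow_div_rpow hc.le p
  have hQ : Tendsto Q atTop (𝓝 0) := by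
    have hnc : Tendsto (fun m => ((n m : ℝ) + c) / m) atTop atTop :=
      tendsto_atTop_mono (fun m => div_le_div_of_nonneg_right (by linarith) m.cast_nonneg) hn
    simpa [Q, Function.comp_def] using (tendsto_rpow_neg_atTop (neg_pos.2 hp)).comp hnc
  have hlower : Tendsto (fun m => (R m - Q m) / -p) atTop (𝓝 (-1 / p)) := by
    simpa [div_neg, neg_div] using (hR.sub hQ).div_const (-p)
  have hupper : Tendsto (fun m => R m / ((m : ℝ) + c) + (R m - Q m) / -p) atTop (𝓝 (-1 / p)) := by
    have hshift : Tendsto (fun m : ℕ => (m : ℝ) + c) atTop atTop :=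
      tendsto_atTop_add_const_right _ c tendsto_natCast_atTop_atTop
    simpa using (hR.div_atTop hshift).add hlower
  have hN : ∀ m, (((n m - m : ℕ) : ℝ) + ((m : ℝ) + c)) = (n m : ℝ) + c := fun m => by
    rw [Nat.cast_sub (hmn m)]; ring
  have hscale : ∀ m : ℕ, (m : ℝ) ^ (-p) * ((((n m : ℝ) + c) ^ p - ((m : ℝ) + c) ^ p) / p)
      = (R m - Q m) / -p := fun m => by
    simp only [R, Q, rpow_neg m.cast_nonneg, div_rpow (by positivity : (0 : ℝ) ≤ n m + c)
      m.cast_nonneg]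
    ring
  refine tendsto_of_tendsto_of_tendsto_of_le_of_le hlower hupper (fun m => ?_) (fun m => ?_)
  · have := le_sum_rpow_sub_one hp.ne (by linarith) (by positivity : 0 < (m : ℝ) + c) (n m - m)
    rw [hN] at this
    rw [← hscale]
    exact mul_le_mul_of_nonneg_left this (by positivity)
  · have := sum_rpow_sub_one_le hp.ne (by linarith)
      (by positivity : 0 < (m : ℝ) + c) (n m - m)
    rw [hN] at this
    have hfirst : (m : ℝ) ^ (-p) * ((m : ℝ) + c) ^ (p - 1) = R m / ((m : ℝ) + c) := by
      simp only [R, rpow_neg m.cast_nonneg, rpow_sub_one (by positivity : (m : ℝ) + c ≠ 0)]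
      ring
    rw [← hfirst, ← hscale, ← mul_add]
    exact mul_le_mul_of_nonneg_left this (by positivity)

end Real

theorem hasSum_sub_succ_of_antitone {f : ℕ → ℝ} (hf : Antitone f) {l : ℝ}
    (hl : Tendsto f atTop (𝓝 l)) : HasSum (fun k => f k - f (k + 1)) (f 0 - l) := by
  rw [hasSum_iff_tendsto_nat_of_nonneg (fun k => sub_nonneg.2 (hf k.le_succ))]
  simp only [sum_range_sub']
  exact tendsto_const_nhds.sub hl

noncomputable def ellpCompl (α : ℝ) (j : ℕ) : ℝ := ((j : ℝ) + (2 : ℝ) ^ (1 / α)) ^ (-α)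

variable {α : ℝ}

theorem two_rpow_one_div_pos : 0 < (2 : ℝ) ^ (1 / α) := Real.rpow_pos_of_pos two_pos _

theorem Dlt_succ (i : ℕ) : Dlt α (i + 1) = ellpCompl α i - ellpCompl α (i + 1) := by
  simp only [Dlt, ellp, ellpCompl, Nat.add_sub_cancel]
  push_cast; ring

theorem ellpCompl_antitone (hα : 0 ≤ α) : Antitone (ellpCompl α) := fun i j hij =>
  Real.rpow_le_rpow_of_nonpos (by have := two_rpow_one_div_pos (α := α); positivity)
    (by gcongr) (neg_nonpos.2 hα)

theorem tendsto_ellpCompl (hα : 0 < α) : Tendsto (ellpCompl α) atTop (𝓝 0) :=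
  (tendsto_rpow_neg_atTop hα).comp
    (tendsto_atTop_add_const_right _ _ tendsto_natCast_atTop_atTop)

theorem tsum_Dlt_add (hα : 0 < α) (n : ℕ) : ∑' k, Dlt α (n + 1 + k) = ellpCompl α n := by
  have hsum := hasSum_sub_succ_of_antitone (f := fun k => ellpCompl α (n + k))
    (fun i j hij => ellpCompl_antitone hα.le (by omega))
    ((tendsto_ellpCompl hα).comp (tendsto_add_atTop_nat n |>.congr fun k => add_comm k n))
  rw [add_zero, sub_zero] at hsum
  refine (hsum.congr_fun fun k => ?_).tsum_eq
  rw [← add_assoc, add_right_comm, Dlt_succ]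

theorem sum_Icc_sq_mul_Dlt (m : ℕ) :
    ∑ k ∈ Icc 1 m, (k : ℝ) ^ 2 * Dlt α k
      = ∑ i ∈ range m, (2 * (i : ℝ) + 1) * ellpCompl α i - (m : ℝ) ^ 2 * ellpCompl α m := by
  induction m with
  | zero => simp
  | succ m ih =>
    rw [sum_Icc_succ_top (by omega), ih, sum_range_succ, Dlt_succ]
    push_cast; ring

theorem sum_Icc_mul_Dlt {m n : ℕ} (hmn : m ≤ n) :
    ∑ k ∈ Icc (m + 1) n, (k : ℝ) * Dlt α k
      = m * ellpCompl α m - n * ellpCompl α n + ∑ k ∈ Ico m n, ellpCompl α k := by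
  induction n, hmn using Nat.le_induction with
  | base => simp
  | succ n hmn ih =>
    rw [sum_Icc_succ_top (by omega), ih, sum_Ico_succ_top hmn, Dlt_succ]
    push_cast; ring

theorem phi_eq_sum (hα : 0 < α) {m n : ℕ} (hmn : m ≤ n) :
    phi α n m = 2 * ∑ i ∈ range m, (2 * (i : ℝ) + 1) * ellpCompl α i
      + 2 * m * ∑ k ∈ Ico m n, ellpCompl α k := by
  rw [phi, sum_Icc_sq_mul_Dlt, sum_Icc_mul_Dlt hmn, tsum_Dlt_add hα]
  ring

theorem odd_mul_ellpCompl (i : ℕ) :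
    (2 * (i : ℝ) + 1) * ellpCompl α i
      = 2 * ((i : ℝ) + 2 ^ (1 / α)) ^ (2 - α - 1)
        + (1 - 2 * 2 ^ (1 / α)) * ((i : ℝ) + 2 ^ (1 / α)) ^ (1 - α - 1) := by
  have hpos : 0 < (i : ℝ) + 2 ^ (1 / α) := by have := two_rpow_one_div_pos (α := α); positivity
  rw [show (2 : ℝ) - α - 1 = -α + 1 by ring, Real.rpow_add_one hpos.ne',
    show 1 - α - 1 = -α by ring, ellpCompl]
  ring

theorem tendsto_sum_odd_mul_ellpCompl (hα : 1 < α) (hα2 : α < 2) :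
    Tendsto (fun m : ℕ => (∑ i ∈ range m, (2 * (i : ℝ) + 1) * ellpCompl α i) / (m : ℝ) ^ (2 - α))
      atTop (𝓝 (2 / (2 - α))) := by
  set c : ℝ := 2 ^ (1 / α)
  have hc : 0 < c := two_rpow_one_div_pos
  have hmain := (Real.tendsto_sum_rpow_sub_one_div_rpow (p := 2 - α) (by linarith)
    (by linarith) hc).const_mul 2
  have hrest : Tendsto
      (fun m : ℕ => (∑ i ∈ range m, ((i : ℝ) + c) ^ (1 - α - 1)) / (m : ℝ) ^ (2 - α))
      atTop (𝓝 0) := by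
    refine squeeze_zero (fun m => by positivity) (fun m => div_le_div_of_nonneg_right
      (Real.sum_rpow_sub_one_le_of_neg (by linarith) hc m) (by positivity))
      (Real.tendsto_const_div_natCast_rpow (by linarith) _)
  have := hmain.add (hrest.const_mul (1 - 2 * c))
  rw [mul_zero, add_zero, mul_one_div] at this
  refine this.congr fun m => ?_
  simp only [odd_mul_ellpCompl, sum_add_distrib, ← mul_sum]
  ring

theorem tendsto_mul_sum_Ico_ellpCompl (hα : 1 < α) {n : ℕ → ℕ} (hmn : ∀ m, m ≤ n m)
    (hn : Tendsto (fun m => (n m : ℝ) / m) atTop atTop) :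
    Tendsto (fun m : ℕ => m * (∑ k ∈ Ico m (n m), ellpCompl α k) / (m : ℝ) ^ (2 - α))
      atTop (𝓝 (1 / (α - 1))) := by
  have htail := Real.tendsto_rpow_neg_mul_sum_rpow_sub_one_tail (p := 1 - α) (by linarith)
    (two_rpow_one_div_pos (α := α)) hmn hn
  rw [show -1 / (1 - α) = 1 / (α - 1) by rw [← neg_sub, div_neg, neg_div, neg_neg]] at htail
  refine htail.congr' ?_
  filter_upwards [eventually_gt_atTop 0] with m hm
  have hm' : (0 : ℝ) < m := Nat.cast_pos.2 hm
  have hscale : (m : ℝ) ^ (-(1 - α)) = m / (m : ℝ) ^ (2 - α) := by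
    rw [show 2 - α = 1 + (1 - α) by ring, Real.rpow_add hm', Real.rpow_one, Real.rpow_neg hm'.le]
    field_simp
  rw [hscale, sum_Ico_eq_sum_range, div_mul_eq_mul_div]
  congr 2
  refine sum_congr rfl fun i _ => ?_
  rw [ellpCompl, show 1 - α - 1 = -α by ring]
  push_cast; ring_nf

theorem tendsto_floor_add_mul_rpow_div {ℓ q : ℝ} (hℓ : 0 < ℓ) (hq : 1 < q) :
    Tendsto (fun m : ℕ => (⌊(m : ℝ) + ℓ * (m : ℝ) ^ q⌋₊ : ℝ) / m) atTop atTop := by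
  refine tendsto_atTop_mono' atTop ?_ (((tendsto_rpow_atTop (by linarith : 0 < q - 1)).comp
    tendsto_natCast_atTop_atTop).const_mul_atTop hℓ)
  filter_upwards [eventually_ge_atTop 1] with m hm
  have hm' : (1 : ℝ) ≤ m := Nat.one_le_cast.2 hm
  have hfloor := Nat.lt_floor_add_one ((m : ℝ) + ℓ * (m : ℝ) ^ q)
  rw [Function.comp_apply, Real.rpow_sub_one (by positivity), mul_div_assoc']
  exact div_le_div_of_nonneg_right (by linarith) (by positivity)

theorem stmt_18 (α ℓ q : ℝ) (hℓ : 0 < ℓ) (hq : 1 < q) (hα : 1 < α) (hα2 : α < 2) :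
    Tendsto
      (fun m : ℕ => phi α ⌊(m : ℝ) + ℓ * (m : ℝ) ^ q⌋₊ m /
        ((2 * α / ((2 - α) * (α - 1))) * (m : ℝ) ^ ((2 : ℝ) - α)))
      atTop (𝓝 1) := by
  set n : ℕ → ℕ := fun m => ⌊(m : ℝ) + ℓ * (m : ℝ) ^ q⌋₊
  have hmn : ∀ m, m ≤ n m := fun m =>
    Nat.le_floor (by simp only [le_add_iff_nonneg_right]; positivity)
  have hlim := ((tendsto_sum_odd_mul_ellpCompl hα hα2).const_mul 2).add
    ((tendsto_mul_sum_Ico_ellpCompl hα hmn (tendsto_floor_add_mul_rpow_div hℓ hq)).const_mul 2)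
  have hconst : (2 * (2 / (2 - α)) + 2 * (1 / (α - 1))) / (2 * α / ((2 - α) * (α - 1))) = 1 := by
    have : 2 - α ≠ 0 := by linarith
    have : α - 1 ≠ 0 := by linarith
    have : α ≠ 0 := by linarith
    field_simp
    ring
  have hratio := hlim.div_const (2 * α / ((2 - α) * (α - 1)))
  rw [hconst] at hratio
  refine hratio.congr fun m => ?_
  rw [phi_eq_sum (by linarith) (hmn m)]
  ring
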